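/- arXiv:2404.03268 — 3 statements merged into one kernel-verified Lean document; each statement's English description precedes it below -/
import Mathlib

section
/- For every natural number N, the limit as M → ∞ of the ratio C(2M, N) / (∑_{k=0}^{⌊N/2⌋} C(M, N−k) · C(N−k, k)) equals 2^N. -/
/-!
Both binomial counts are polynomials of degree `N` in `M`. The numerator behaves like
`(2M)^N / N! ~ 2^N · C(M, N)`, while in the denominator only the `k = 0` term `C(M, N)` has
degree `N`; every other term is `O(M^(N-k))`, hence negligible. The ratio is therefore
asymptotically equivalent to `2^N`.
-/

open Filter Asymptotics

theorem isLittleO_choose_of_lt {j N : ℕ} (h : j < N) :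
    (fun M : ℕ => (M.choose j : ℝ)) =o[atTop] fun M : ℕ => (M.choose N : ℝ) :=
  (isTheta_choose j).trans_isLittleO <|
    ((isLittleO_pow_pow_atTop_of_lt h).comp_tendsto tendsto_natCast_atTop_atTop).trans_isTheta
      (isTheta_choose N).symm

theorem isEquivalent_choose_two_mul (N : ℕ) :
    (fun M : ℕ => ((2 * M).choose N : ℝ)) ~[atTop] fun M : ℕ => 2 ^ N * (M.choose N : ℝ) := by
  have hnum : (fun M : ℕ => ((2 * M).choose N : ℝ)) ~[atTop]
      fun M : ℕ => 2 ^ N * ((M : ℝ) ^ N / N.factorial) := by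
    refine ((isEquivalent_choose N).comp_tendsto
      (tendsto_id.const_mul_atTop' two_pos)).congr_right (Eventually.of_forall fun M => ?_)
    simp only [Function.comp_apply, id_eq, Nat.cast_mul, Nat.cast_ofNat, mul_pow, mul_div_assoc]
  exact hnum.trans (IsEquivalent.refl.mul (isEquivalent_choose N).symm)

theorem isEquivalent_sum_choose_mul_choose (N : ℕ) :
    (fun M : ℕ => ((∑ k ∈ Finset.range (N / 2 + 1),
        M.choose (N - k) * (N - k).choose k : ℕ) : ℝ)) ~[atTop]
      fun M : ℕ => (M.choose N : ℝ) := by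
  have hrest : (fun M : ℕ => ∑ k ∈ Finset.range (N / 2),
      ((N - (k + 1)).choose (k + 1) : ℝ) * (M.choose (N - (k + 1)) : ℝ)) =o[atTop]
        fun M : ℕ => (M.choose N : ℝ) := by
    refine IsLittleO.fun_sum fun k hk => ?_
    have hkN : N - (k + 1) < N := by
      have := Finset.mem_range.mp hk
      have := Nat.div_le_self N 2
      omega
    exact (isLittleO_choose_of_lt hkN).const_mul_left _
  refine (IsEquivalent.refl.add_isLittleO hrest).congr_left (Eventually.of_forall fun M => ?_)
  dsimp only [Pi.add_apply]
  rw [Finset.sum_range_succ', add_comm]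
  push_cast
  simp only [Nat.sub_zero, Nat.choose_zero_right, Nat.cast_one, mul_one, mul_comm]

/-- For every natural number `N`, the ratio
`C(2M, N) / (∑_{k=0}^{⌊N/2⌋} C(M, N−k)·C(N−k, k))` tends to `2^N` as `M → ∞`. -/
theorem stmt_2 (N : ℕ) :
    Tendsto
      (fun M : ℕ =>
        (Nat.choose (2 * M) N : ℝ) /
          ((∑ k ∈ Finset.range (N / 2 + 1),
              Nat.choose M (N - k) * Nat.choose (N - k) k : ℕ) : ℝ))
      atTop (nhds ((2 : ℝ) ^ N)) := by
  have hratio := (isEquivalent_choose_two_mul N).div (isEquivalent_sum_choose_mul_choose N)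
  refine hratio.tendsto_nhds_iff.mpr (tendsto_const_nhds.congr' ?_)
  filter_upwards [eventually_ge_atTop N] with M hM
  have hchoose : (M.choose N : ℝ) ≠ 0 := Nat.cast_ne_zero.mpr (Nat.choose_pos hM).ne'
  simp only [Pi.div_apply, mul_div_cancel_right₀ _ hchoose]
end

section
/- For natural numbers M ≥ N ≥ 1, the Hund-subspace dimension satisfies ∑_{k=0}^{⌊N/2⌋} C(M, N−k)·C(N−k, k) ≤ C(2M, N), with strict inequality when N ≥ 2 and M ≥ 2. -/
/-!
By Vandermonde, `C(2M, N) = ∑_{j ≤ N} C(M, j) C(M, N - j)` counts the choices of `j` spin-down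
and `N - j` spin-up orbitals. The `k`-th Hund term is at most the `j = k` term, because
`N - k ≤ M` gives `C(N - k, k) ≤ C(M, k)`; and the Hund sum stops at `k = N / 2 < N`, so it misses
the positive term `j = N`, which is `C(M, N)`.
-/

open Finset

theorem Nat.choose_two_mul_eq_sum_range (M N : ℕ) :
    (2 * M).choose N = ∑ j ∈ range (N + 1), M.choose j * M.choose (N - j) := by
  rw [two_mul, Nat.add_choose_eq, Nat.sum_antidiagonal_eq_sum_range_succ_mk]

theorem Nat.sum_range_choose_mul_choose_sub_lt {M N n : ℕ} (hn : n < N) (hNM : N ≤ M) :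
    ∑ j ∈ range (n + 1), M.choose j * M.choose (N - j) < (2 * M).choose N := by
  rw [Nat.choose_two_mul_eq_sum_range]
  refine sum_lt_sum_of_subset (range_subset_range.2 (by omega)) (i := N)
    (mem_range.2 N.lt_succ_self) (by simpa using hn) ?_ fun _ _ _ => Nat.zero_le _
  simpa using Nat.choose_pos hNM

theorem Nat.choose_mul_choose_le_choose_mul_choose {M N k : ℕ} (hNM : N ≤ M) :
    M.choose (N - k) * (N - k).choose k ≤ M.choose k * M.choose (N - k) := by
  rw [mul_comm]
  exact Nat.mul_le_mul_right _ (Nat.choose_le_choose k (by omega))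

/-- For `M ≥ N ≥ 1`, the Hund-subspace dimension satisfies
`∑_{k=0}^{⌊N/2⌋} C(M, N−k)·C(N−k, k) ≤ C(2M, N)`, with strict inequality when
`N ≥ 2` and `M ≥ 2`. -/
theorem stmt_11 (M N : ℕ) (hN : 1 ≤ N) (hNM : N ≤ M) :
    (∑ k ∈ Finset.range (N / 2 + 1), Nat.choose M (N - k) * Nat.choose (N - k) k) ≤
        Nat.choose (2 * M) N ∧
      (2 ≤ N → 2 ≤ M →
        (∑ k ∈ Finset.range (N / 2 + 1), Nat.choose M (N - k) * Nat.choose (N - k) k) <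
          Nat.choose (2 * M) N) := by
  have hlt : (∑ k ∈ range (N / 2 + 1), M.choose (N - k) * (N - k).choose k) <
      (2 * M).choose N :=
    (sum_le_sum fun k _ => Nat.choose_mul_choose_le_choose_mul_choose hNM).trans_lt
      (Nat.sum_range_choose_mul_choose_sub_lt (by omega) hNM)
  exact ⟨hlt.le, fun _ _ => hlt⟩
end

section
/- For fixed N, for all sufficiently large M the difference ⌈log₂ C(2M, N)⌉ − ⌈log₂ (∑_{k=0}^{⌊N/2⌋} C(M, N−k)·C(N−k, k))⌉ lies in {N−1, N}. -/
open Finset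

private lemma tele (a b : ℕ → ℕ) (C : ℕ) :
    ∀ n : ℕ, (∀ i, i ≤ n → b i ≤ a i) → (∀ i, i ≤ n → a i ≤ C) →
    ∏ i ∈ range (n+1), a i ≤
      ∏ i ∈ range (n+1), b i + (∑ i ∈ range (n+1), (a i - b i)) * C ^ n := by
  intro n
  induction n with
  | zero =>
    intro hb hC
    simp only [zero_add, prod_range_one, sum_range_one, pow_zero, mul_one]
    have := hb 0 le_rfl
    omega
  | succ n ih =>
    intro hb hC
    have hb' : ∀ i, i ≤ n → b i ≤ a i := fun i hi => hb i (by omega)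
    have hC' : ∀ i, i ≤ n → a i ≤ C := fun i hi => hC i (by omega)
    have ihh := ih hb' hC'
    have hPb : ∏ i ∈ range (n+1), b i ≤ C ^ (n+1) := by
      calc ∏ i ∈ range (n+1), b i ≤ ∏ i ∈ range (n+1), (fun _ => C) i :=
            Finset.prod_le_prod' (fun i hi => by
              have hi' : i ≤ n := by simpa [Nat.lt_succ_iff] using hi
              exact le_trans (hb' i hi') (hC' i hi'))
        _ = C ^ (n+1) := by simp
    have ha : a (n+1) = b (n+1) + (a (n+1) - b (n+1)) := by
      have := hb (n+1) le_rfl; omega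
    have haC : a (n+1) ≤ C := hC (n+1) le_rfl
    calc ∏ i ∈ range (n+1+1), a i = (∏ i ∈ range (n+1), a i) * a (n+1) :=
          prod_range_succ a (n+1)
      _ ≤ (∏ i ∈ range (n+1), b i + (∑ i ∈ range (n+1), (a i - b i)) * C ^ n) * a (n+1) :=
          Nat.mul_le_mul_right _ ihh
      _ = (∏ i ∈ range (n+1), b i) * a (n+1)
          + (∑ i ∈ range (n+1), (a i - b i)) * (C ^ n * a (n+1)) := by ring
      _ ≤ (∏ i ∈ range (n+1), b i) * (b (n+1) + (a (n+1) - b (n+1)))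
          + (∑ i ∈ range (n+1), (a i - b i)) * (C ^ n * C) :=
            Nat.add_le_add (by rw [← ha]) (Nat.mul_le_mul_left _ (Nat.mul_le_mul_left _ haC))
      _ = (∏ i ∈ range (n+1), b i) * b (n+1)
          + ((∏ i ∈ range (n+1), b i) * (a (n+1) - b (n+1))
            + (∑ i ∈ range (n+1), (a i - b i)) * C ^ (n+1)) := by ring
      _ ≤ (∏ i ∈ range (n+1), b i) * b (n+1)
          + (C ^ (n+1) * (a (n+1) - b (n+1))
            + (∑ i ∈ range (n+1), (a i - b i)) * C ^ (n+1)) :=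
            Nat.add_le_add_left (Nat.add_le_add_right (Nat.mul_le_mul_right _ hPb) _) _
      _ = (∏ i ∈ range (n+1), b i) * b (n+1)
          + (∑ i ∈ range (n+1), (a i - b i) + (a (n+1) - b (n+1))) * C ^ (n+1) := by ring
      _ = ∏ i ∈ range (n+1+1), b i + (∑ i ∈ range (n+1+1), (a i - b i)) * C ^ (n+1) := by
            rw [prod_range_succ b (n+1), sum_range_succ (fun i => a i - b i) (n+1)]

/-- `M^k ≤ (M-N)^k + k*N*M^(k-1)` packaged with the `2^k` trick:
if `2*N ≤ M` and `k*N*2^k ≤ M` then `M^k ≤ 2*(M-N)^k`. -/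
private lemma pow_le_two_mul_sub_pow (M N k : ℕ) (h1 : 2*N ≤ M) (h2 : k*N*2^k ≤ M) :
    M ^ k ≤ 2 * (M - N) ^ k := by
  rcases Nat.eq_zero_or_pos k with rfl | hk
  · simp
  obtain ⟨n, rfl⟩ := Nat.exists_eq_add_of_le hk   -- k = 1 + n
  set k := 1 + n with hkdef
  -- step 1 : M^k ≤ (M-N)^k + k*N*M^(k-1)
  have step1 : M ^ k ≤ (M - N) ^ k + k * N * M ^ n := by
    have := tele (fun _ => M) (fun _ => M - N) M n
      (fun i _ => Nat.sub_le _ _) (fun i _ => le_rfl)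
    simp only [prod_const, sum_const, card_range, smul_eq_mul] at this
    have hsub : M - (M - N) = N := by omega
    rw [hsub] at this
    calc M ^ k = ∏ i ∈ range (n+1), M := by simp [hkdef, Nat.add_comm]
      _ ≤ (M - N) ^ (n+1) + (n+1) * N * M ^ n := by
          simpa [prod_const, card_range] using this
      _ = (M - N) ^ k + k * N * M ^ n := by rw [hkdef, Nat.add_comm 1 n]
  -- step 2 : k*N*M^n ≤ (M-N)^k
  have step2 : k * N * M ^ n ≤ (M - N) ^ k := by
    have hMle : M ≤ 2 * (M - N) := by omega
    have hpow : M ^ k ≤ 2 ^ k * (M - N) ^ k := by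
      calc M ^ k ≤ (2 * (M - N)) ^ k := Nat.pow_le_pow_left hMle k
        _ = 2 ^ k * (M - N) ^ k := mul_pow 2 (M - N) k
    have h3 : k * N * 2 ^ k * M ^ n ≤ M * M ^ n := Nat.mul_le_mul_right _ h2
    have h4 : M * M ^ n = M ^ k := by rw [hkdef]; ring
    have h5 : 2 ^ k * (k * N * M ^ n) ≤ 2 ^ k * (M - N) ^ k := by
      calc 2 ^ k * (k * N * M ^ n) = k * N * 2 ^ k * M ^ n := by ring
        _ ≤ M ^ k := by rw [← h4]; exact h3
        _ ≤ 2 ^ k * (M - N) ^ k := hpow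
    exact Nat.le_of_mul_le_mul_left h5 (Nat.pow_pos (by norm_num))
  calc M ^ k ≤ (M - N) ^ k + k * N * M ^ n := step1
    _ ≤ (M - N) ^ k + (M - N) ^ k := Nat.add_le_add_left step2 _
    _ = 2 * (M - N) ^ k := by ring

theorem stmt_12 (N : ℕ) :
    ∃ M₀ : ℕ, ∀ M : ℕ, M₀ ≤ M →
      (⌈Real.logb 2 (Nat.choose (2 * M) N : ℝ)⌉ -
          ⌈Real.logb 2
            ((∑ k ∈ Finset.range (N / 2 + 1),
                Nat.choose M (N - k) * Nat.choose (N - k) k : ℕ) : ℝ)⌉ = (N : ℤ) - 1) ∨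
      (⌈Real.logb 2 (Nat.choose (2 * M) N : ℝ)⌉ -
          ⌈Real.logb 2
            ((∑ k ∈ Finset.range (N / 2 + 1),
                Nat.choose M (N - k) * Nat.choose (N - k) k : ℕ) : ℝ)⌉ = (N : ℤ)) := by
  rcases Nat.eq_zero_or_pos N with rfl | hN
  · refine ⟨0, fun M _ => Or.inr ?_⟩
    norm_num [Real.logb_one]
  -- now 1 ≤ N
  refine ⟨2*N + N*N*2^N + 2*N.factorial*N^(N+1) + N + 1, fun M hM => ?_⟩
  set S : ℕ := ∑ k ∈ Finset.range (N / 2 + 1), Nat.choose M (N - k) * Nat.choose (N - k) k with hSdef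
  have h2N : 2*N ≤ M := by
    have : 2*N ≤ 2*N + N*N*2^N + 2*N.factorial*N^(N+1) + N + 1 := by omega
    omega
  have hNM : N < M := by omega
  have hL4cond : (N-1)*N*2^(N-1) ≤ M := by
    have h1 : (N-1)*N*2^(N-1) ≤ N*N*2^N :=
      Nat.mul_le_mul (Nat.mul_le_mul_right _ (Nat.sub_le _ _)) (Nat.pow_le_pow_right (by norm_num) (Nat.sub_le _ _))
    omega
  have hL4 : M^(N-1) ≤ 2*(M-N)^(N-1) := pow_le_two_mul_sub_pow M N (N-1) h2N hL4cond
  have hstrict : 2*N.factorial*N^(N+1) < M - N := by omega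
  have hMNpow : 0 < (M-N)^(N-1) := Nat.pow_pos (by omega)
  have hfacpos : 0 < N.factorial := N.factorial_pos
  -- descFactorial lower/upper auxiliary products
  have hdlow : ∀ k : ℕ, k ≤ N → (M-N)^k ≤ Nat.descFactorial M k := by
    intro k hk
    rw [Nat.descFactorial_eq_prod_range]
    calc (M-N)^k = ∏ _i ∈ range k, (M-N) := by simp
      _ ≤ ∏ i ∈ range k, (M - i) := Finset.prod_le_prod' (fun i hi => by
          have : i < k := mem_range.mp hi
          omega)
  -- A1 : 2^N * descF M N ≤ descF (2M) N
  have hA1 : 2^N * Nat.descFactorial M N ≤ Nat.descFactorial (2*M) N := by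
    rw [Nat.descFactorial_eq_prod_range, Nat.descFactorial_eq_prod_range]
    calc 2^N * ∏ i ∈ range N, (M - i) = ∏ i ∈ range N, (2 * (M - i)) := by
          rw [Finset.prod_mul_distrib, Finset.prod_const, card_range]
      _ ≤ ∏ i ∈ range N, (2*M - i) := Finset.prod_le_prod' (fun i hi => by
          have : i < N := mem_range.mp hi
          omega)
  have hA1c : 2^N * Nat.choose M N ≤ Nat.choose (2*M) N := by
    rw [Nat.descFactorial_eq_factorial_mul_choose, Nat.descFactorial_eq_factorial_mul_choose] at hA1
    refine Nat.le_of_mul_le_mul_left ?_ hfacpos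
    calc N.factorial * (2^N * Nat.choose M N) = 2^N * (N.factorial * Nat.choose M N) := by ring
      _ ≤ N.factorial * Nat.choose (2*M) N := hA1
  -- Split the sum : S = T + choose M N
  set f : ℕ → ℕ := fun k => Nat.choose M (N - k) * Nat.choose (N - k) k with hfdef
  set T : ℕ := ∑ k ∈ range (N/2), f (k+1) with hTdef
  have hf0 : f 0 = Nat.choose M N := by simp [hfdef]
  have hsplit : S = T + Nat.choose M N := by
    rw [hSdef, Finset.sum_range_succ' f (N/2), hf0]
  -- Bound T
  have hTle : T ≤ N^(N+1) * M^(N-1) := by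
    have hterm : ∀ k ∈ range (N/2), f (k+1) ≤ N^N * M^(N-1) := by
      intro k hk
      have hk' : k < N/2 := mem_range.mp hk
      have h1 : Nat.choose M (N-(k+1)) ≤ M^(N-1) := by
        calc Nat.choose M (N-(k+1)) ≤ M^(N-(k+1)) := Nat.choose_le_pow _ _
          _ ≤ M^(N-1) := Nat.pow_le_pow_right (by omega) (by omega)
      have h2 : Nat.choose (N-(k+1)) (k+1) ≤ N^N := by
        calc Nat.choose (N-(k+1)) (k+1) ≤ (N-(k+1))^(k+1) := Nat.choose_le_pow _ _
          _ ≤ N^(k+1) := Nat.pow_le_pow_left (by omega) _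
          _ ≤ N^N := Nat.pow_le_pow_right hN (by omega)
      calc f (k+1) = Nat.choose M (N-(k+1)) * Nat.choose (N-(k+1)) (k+1) := rfl
        _ ≤ M^(N-1) * N^N := Nat.mul_le_mul h1 h2
        _ = N^N * M^(N-1) := by ring
    calc T ≤ (range (N/2)).card • (N^N * M^(N-1)) := Finset.sum_le_card_nsmul _ _ _ hterm
      _ = (N/2) * (N^N * M^(N-1)) := by rw [card_range, smul_eq_mul]
      _ ≤ N * (N^N * M^(N-1)) := Nat.mul_le_mul_right _ (by omega)
      _ = N^(N+1) * M^(N-1) := by rw [pow_succ]; ring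
  have hTC : T < Nat.choose M N := by
    have key : N.factorial * T < N.factorial * Nat.choose M N := by
      calc N.factorial * T ≤ N.factorial * (N^(N+1) * M^(N-1)) := Nat.mul_le_mul_left _ hTle
        _ ≤ N.factorial * (N^(N+1) * (2*(M-N)^(N-1))) :=
            Nat.mul_le_mul_left _ (Nat.mul_le_mul_left _ hL4)
        _ = (2*N.factorial*N^(N+1)) * (M-N)^(N-1) := by ring
        _ < (M-N) * (M-N)^(N-1) := Nat.mul_lt_mul_of_lt_of_le hstrict le_rfl hMNpow
        _ = (M-N)^N := by rw [← pow_succ']; congr 1; omega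
        _ ≤ Nat.descFactorial M N := hdlow N le_rfl
        _ = N.factorial * Nat.choose M N := Nat.descFactorial_eq_factorial_mul_choose _ _
    exact Nat.lt_of_mul_lt_mul_left key
  -- A : 2^(N-1) * S < choose (2M) N
  have hA : 2^(N-1) * S < Nat.choose (2*M) N := by
    have hS2 : S < 2 * Nat.choose M N := by omega
    calc 2^(N-1) * S < 2^(N-1) * (2 * Nat.choose M N) :=
          Nat.mul_lt_mul_of_le_of_lt le_rfl hS2 (Nat.pow_pos (by norm_num))
      _ = 2^N * Nat.choose M N := by
          rw [show (2:ℕ)^N = 2^(N-1) * 2 from by rw [← pow_succ]; congr 1; omega]; ring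
      _ ≤ Nat.choose (2*M) N := hA1c
  -- B : choose (2M) N ≤ 2^N * S
  have hB1 : Nat.descFactorial (2*M) N ≤
      2^N * Nat.descFactorial M N + (∑ i ∈ range N, i) * (2*M)^(N-1) := by
    obtain ⟨n, hn⟩ : ∃ n, N = n + 1 := ⟨N - 1, by omega⟩
    have := tele (fun i => 2*M - i) (fun i => 2*(M-i)) (2*M) n
      (fun i hi => by show 2*(M-i) ≤ 2*M - i; omega)
      (fun i hi => by show 2*M - i ≤ 2*M; omega)
    have hsum : ∑ i ∈ range (n+1), ((2*M - i) - 2*(M-i)) = ∑ i ∈ range (n+1), i :=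
      Finset.sum_congr rfl (fun i hi => by
        have : i < n + 1 := mem_range.mp hi
        omega)
    rw [hsum] at this
    have hprodb : ∏ i ∈ range (n+1), (2*(M-i)) = 2^N * Nat.descFactorial M N := by
      rw [Nat.descFactorial_eq_prod_range, Finset.prod_mul_distrib, Finset.prod_const, card_range, hn]
    rw [hprodb] at this
    calc Nat.descFactorial (2*M) N = ∏ i ∈ range (n+1), (2*M - i) := by
          rw [Nat.descFactorial_eq_prod_range, hn]
      _ ≤ 2^N * Nat.descFactorial M N + (∑ i ∈ range (n+1), i) * (2*M)^n := this
      _ = 2^N * Nat.descFactorial M N + (∑ i ∈ range N, i) * (2*M)^(N-1) := by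
          rw [hn]; norm_num
  have hB2 : (∑ i ∈ range N, i) * (2*M)^(N-1) ≤
      2^N * ((N-1) * (N * Nat.descFactorial M (N-1))) := by
    refine Nat.le_of_mul_le_mul_left ?_ (show 0 < 2 by norm_num)
    have hdl : (M-N)^(N-1) ≤ Nat.descFactorial M (N-1) := hdlow (N-1) (by omega)
    calc 2 * ((∑ i ∈ range N, i) * (2*M)^(N-1))
        = ((∑ i ∈ range N, i) * 2) * (2*M)^(N-1) := by ring
      _ = (N * (N-1)) * (2*M)^(N-1) := by rw [Finset.sum_range_id_mul_two]
      _ = (N * (N-1)) * (2^(N-1) * M^(N-1)) := by rw [mul_pow]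
      _ ≤ (N * (N-1)) * (2^(N-1) * (2*(M-N)^(N-1))) :=
          Nat.mul_le_mul_left _ (Nat.mul_le_mul_left _ hL4)
      _ = (N * (N-1)) * ((2^(N-1) * 2) * (M-N)^(N-1)) := by ring
      _ = (N * (N-1)) * (2^N * (M-N)^(N-1)) := by
          rw [show (2:ℕ)^(N-1) * 2 = 2^N from by rw [← pow_succ]; congr 1; omega]
      _ ≤ (N * (N-1)) * (2^N * Nat.descFactorial M (N-1)) :=
          Nat.mul_le_mul_left _ (Nat.mul_le_mul_left _ hdl)
      _ ≤ 2 * (2^N * ((N-1) * (N * Nat.descFactorial M (N-1)))) := by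
          rw [show 2 * (2^N * ((N-1) * (N * Nat.descFactorial M (N-1))))
              = 2 * ((N * (N-1)) * (2^N * Nat.descFactorial M (N-1))) from by ring]
          exact Nat.le_mul_of_pos_left _ (by norm_num)
  have hBc : Nat.choose (2*M) N ≤ 2^N * (Nat.choose M N + (N-1) * Nat.choose M (N-1)) := by
    have hcomb := le_trans hB1 (Nat.add_le_add_left hB2 _)
    have hfac : N * Nat.descFactorial M (N-1) = N.factorial * Nat.choose M (N-1) := by
      rw [Nat.descFactorial_eq_factorial_mul_choose, ← Nat.mul_assoc, Nat.mul_factorial_pred hN.ne']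
    rw [Nat.descFactorial_eq_factorial_mul_choose, Nat.descFactorial_eq_factorial_mul_choose,
      hfac] at hcomb
    refine Nat.le_of_mul_le_mul_left ?_ hfacpos
    calc N.factorial * Nat.choose (2*M) N
        ≤ 2^N * (N.factorial * Nat.choose M N) + 2^N * ((N-1) * (N.factorial * Nat.choose M (N-1))) := hcomb
      _ = N.factorial * (2^N * (Nat.choose M N + (N-1) * Nat.choose M (N-1))) := by ring
  have hSB : Nat.choose M N + (N-1) * Nat.choose M (N-1) ≤ S := by
    rcases Nat.lt_or_ge N 2 with hN2 | hN2
    · -- N = 1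
      have hN1 : N = 1 := by omega
      have h0 : f 0 ≤ S := Finset.single_le_sum (f := f) (fun i _ => Nat.zero_le _)
        (by simp)
      rw [hf0] at h0
      have : (N-1) * Nat.choose M (N-1) = 0 := by rw [hN1]; norm_num
      omega
    · have hsub : ({0, 1} : Finset ℕ) ⊆ range (N/2 + 1) := by
        intro x hx
        simp only [Finset.mem_insert, Finset.mem_singleton] at hx
        rcases hx with rfl | rfl <;> · simp only [mem_range]; omega
      have hle : ∑ k ∈ ({0,1} : Finset ℕ), f k ≤ S :=
        Finset.sum_le_sum_of_subset hsub
      rw [Finset.sum_pair (by norm_num : (0:ℕ) ≠ 1), hf0] at hle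
      have hf1 : f 1 = (N-1) * Nat.choose M (N-1) := by
        simp only [hfdef]
        rw [Nat.choose_one_right]
        ring
      omega
  have hB : Nat.choose (2*M) N ≤ 2^N * S :=
    le_trans hBc (Nat.mul_le_mul_left _ hSB)
  -- positivity
  have hS1 : 1 ≤ S := by
    have h0 : f 0 ≤ S := Finset.single_le_sum (f := f) (fun i _ => Nat.zero_le _) (by simp)
    have : 0 < Nat.choose M N := Nat.choose_pos (by omega)
    omega
  have hx1 : 1 ≤ Nat.choose (2*M) N := Nat.choose_pos (by omega)
  -- pass to the reals
  set x : ℝ := (Nat.choose (2*M) N : ℝ) with hxdef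
  set s : ℝ := (S : ℝ) with hsRdef
  have hsR : (1:ℝ) ≤ s := by rw [hsRdef]; exact_mod_cast hS1
  have hxR : (1:ℝ) ≤ x := by rw [hxdef]; exact_mod_cast hx1
  have hspos : (0:ℝ) < s := by linarith
  have hxpos : (0:ℝ) < x := by linarith
  have hupR : x ≤ 2^N * s := by
    rw [hxdef, hsRdef]; exact_mod_cast hB
  have hloR : 2^(N-1) * s ≤ x := by
    rw [hxdef, hsRdef]
    exact_mod_cast le_of_lt hA
  have hone : (1:ℝ) < 2 := one_lt_two
  have hlogup : Real.logb 2 x ≤ Real.logb 2 s + (N:ℝ) := by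
    calc Real.logb 2 x ≤ Real.logb 2 (2^N * s) := Real.logb_le_logb_of_le hone hxpos hupR
      _ = Real.logb 2 (2^N) + Real.logb 2 s := Real.logb_mul (by positivity) (by positivity)
      _ = Real.logb 2 s + (N:ℝ) := by
          rw [Real.logb_pow, Real.logb_self_eq_one hone]; ring
  have hloglo : Real.logb 2 s + ((N-1 : ℕ):ℝ) ≤ Real.logb 2 x := by
    calc Real.logb 2 s + ((N-1:ℕ):ℝ) = Real.logb 2 (2^(N-1) * s) := by
          rw [Real.logb_mul (by positivity) (by positivity), Real.logb_pow,
            Real.logb_self_eq_one hone]; ring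
      _ ≤ Real.logb 2 x := Real.logb_le_logb_of_le hone (by positivity) hloR
  have hc1 : ⌈Real.logb 2 x⌉ ≤ ⌈Real.logb 2 s⌉ + (N:ℤ) := by
    have := Int.ceil_le_ceil hlogup
    rwa [Int.ceil_add_natCast] at this
  have hc2 : ⌈Real.logb 2 s⌉ + ((N-1:ℕ):ℤ) ≤ ⌈Real.logb 2 x⌉ := by
    have := Int.ceil_le_ceil hloglo
    rwa [Int.ceil_add_natCast] at this
  have hgoal : ⌈Real.logb 2 x⌉ - ⌈Real.logb 2 s⌉ = (N:ℤ) - 1 ∨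
      ⌈Real.logb 2 x⌉ - ⌈Real.logb 2 s⌉ = (N:ℤ) := by omega
  exact hgoal
end
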